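/- Fix β > 1, j > 0, ε > 0, α > 0, and let m₁, m₂ : [−ε⁻¹, ε⁻¹] → [−m_β, m_β] be bounded measurable. Define [H(m)](x) = −jε ∫₀ˣ dy/χ_β(m(y)) and the weighted norm ‖f‖_{ε,α} = sup_{|x| ≤ ε⁻¹} e^{−αε|x|} |f(x)|. Then ‖H(m₂) − H(m₁)‖_{ε,α} ≤ (2βj / (α χ_β(m_β)²)) ‖m₂ − m₁‖_{ε,α}. -/

import Mathlib

open MeasureTheory Set Real

/-!
The difference `1/χ_β(m₂) − 1/χ_β(m₁)` is Lipschitz in `m₂ − m₁` with constant `2β/χ_β(m_β)²`,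
since `χ_β ≥ χ_β(m_β)` on `[−m_β, m_β]`. Hence, with `N = ‖m₂ − m₁‖_{ε,α}`, the integrand of
`H(m₂) − H(m₁)` is at most `(2β/χ_β(m_β)²) N e^{αε|y|}`, and integrating from `0` to `x` gains the
factor `1/(αε)` against the weight `e^{−αε|x|}`, which the prefactor `jε` turns into `j/α`.
-/

def chi (β m : ℝ) : ℝ := β * (1 - m ^ 2)

section Chi

variable {β μ a b : ℝ}

lemma chi_le_chi_of_abs_le (hβ : 0 ≤ β) (ha : |a| ≤ μ) : chi β μ ≤ chi β a := by
  have : a ^ 2 ≤ μ ^ 2 := by simpa only [sq_abs] using pow_le_pow_left₀ (abs_nonneg a) ha 2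
  unfold chi
  gcongr

lemma chi_pos (hβ : 0 < β) (hμ : μ < 1) (hμ₀ : 0 ≤ μ) : 0 < chi β μ :=
  mul_pos hβ (by nlinarith)

lemma abs_one_div_chi_sub_one_div_chi_le (hβ : 0 < β) (hμ : μ < 1) (ha : |a| ≤ μ)
    (hb : |b| ≤ μ) :
    |1 / chi β a - 1 / chi β b| ≤ 2 * β / chi β μ ^ 2 * |a - b| := by
  have hχ : 0 < chi β μ := chi_pos hβ hμ ((abs_nonneg a).trans ha)
  have hχa := chi_le_chi_of_abs_le hβ.le ha
  have hχb := chi_le_chi_of_abs_le hβ.le hb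
  have hsum : |a + b| ≤ 2 := (abs_add_le a b).trans (by linarith)
  have hdiff : 1 / chi β a - 1 / chi β b = β * (a + b) * (a - b) / (chi β a * chi β b) := by
    rw [div_sub_div _ _ (hχ.trans_le hχa).ne' (hχ.trans_le hχb).ne']
    unfold chi
    ring
  rw [hdiff, abs_div, abs_mul, abs_mul, abs_of_pos hβ,
    abs_of_pos (mul_pos (hχ.trans_le hχa) (hχ.trans_le hχb)), div_mul_eq_mul_div]
  gcongr ?_ / ?_
  · have := mul_le_mul_of_nonneg_left hsum (mul_nonneg hβ.le (abs_nonneg (a - b)))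
    linarith
  · rw [sq]
    exact mul_le_mul hχa hχb hχ.le (hχ.trans_le hχa).le

lemma intervalIntegrable_one_div_chi {m : ℝ → ℝ} (hβ : 0 < β) (hμ : μ < 1) (hm : Measurable m)
    (hmb : ∀ y ∈ uIcc a b, |m y| ≤ μ) :
    IntervalIntegrable (fun y => 1 / chi β (m y)) volume a b := by
  refine (intervalIntegrable_const (c := 1 / chi β μ)).mono_fun'
    (Measurable.aestronglyMeasurable (by unfold chi; fun_prop))
    (ae_restrict_of_forall_mem measurableSet_uIoc fun y hy => ?_)
  dsimp only
  have hy := hmb y (uIoc_subset_uIcc hy)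
  have hχ : 0 < chi β μ := chi_pos hβ hμ ((abs_nonneg _).trans hy)
  have hχy := chi_le_chi_of_abs_le hβ.le hy
  rw [Real.norm_eq_abs, abs_of_pos (one_div_pos.2 (hχ.trans_le hχy))]
  exact one_div_le_one_div_of_le hχ hχy

end Chi

section Volterra

variable {g : ℝ → ℝ} {K c : ℝ}

lemma abs_integral_le_of_abs_le_mul_exp {t : ℝ} (hc : 0 < c) (hK : 0 ≤ K) (ht : 0 ≤ t)
    (hg : ∀ y ∈ Icc 0 t, |g y| ≤ K * exp (c * y)) :
    |∫ y in 0..t, g y| ≤ K * exp (c * t) / c :=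
  calc |∫ y in 0..t, g y| = ‖∫ y in 0..t, g y‖ := rfl
    _ ≤ ∫ y in 0..t, K * exp (c * y) :=
        intervalIntegral.norm_integral_le_of_norm_le ht
          (ae_of_all _ fun y hy => hg y (Ioc_subset_Icc_self hy))
          ((by fun_prop : Continuous fun y => K * exp (c * y)).intervalIntegrable _ _)
    _ = K * (exp (c * t) - 1) / c := by
        rw [intervalIntegral.integral_const_mul, intervalIntegral.integral_comp_mul_left exp hc.ne',
          integral_exp]
        simp only [mul_zero, exp_zero, smul_eq_mul]
        field_simp
    _ ≤ K * exp (c * t) / c := by gcongr; linarith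

lemma exp_neg_mul_abs_integral_le {x : ℝ} (hc : 0 < c) (hK : 0 ≤ K)
    (hg : ∀ y ∈ uIcc 0 x, |g y| ≤ K * exp (c * |y|)) :
    exp (-(c * |x|)) * |∫ y in 0..x, g y| ≤ K / c := by
  suffices h : |∫ y in 0..x, g y| ≤ K * exp (c * |x|) / c by
    calc exp (-(c * |x|)) * |∫ y in 0..x, g y|
        ≤ exp (-(c * |x|)) * (K * exp (c * |x|) / c) := by gcongr
      _ = K / c := by rw [exp_neg]; field_simp
  rcases le_total 0 x with hx | hx
  · rw [abs_of_nonneg hx]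
    refine abs_integral_le_of_abs_le_mul_exp hc hK hx fun y hy => ?_
    simpa only [abs_of_nonneg hy.1] using hg y (uIcc_of_le hx ▸ hy)
  · have hreflect : ∫ y in 0..x, g y = -∫ y in 0..-x, g (-y) := by
      rw [intervalIntegral.integral_comp_neg, neg_neg, neg_zero, intervalIntegral.integral_symm]
    rw [hreflect, abs_neg, abs_of_nonpos hx]
    refine abs_integral_le_of_abs_le_mul_exp hc hK (neg_nonneg.2 hx) fun y hy => ?_
    simpa only [abs_neg, abs_of_nonneg hy.1] using
      hg (-y) (uIcc_of_ge hx ▸ ⟨by linarith [hy.2], by linarith [hy.1]⟩)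

end Volterra

lemma le_cbiSup_of_bddAbove_image {α ι : Type*} [ConditionallyCompleteLattice α] {S : Set ι}
    {F : ι → α} (hF : BddAbove (F '' S)) {y : ι} (hy : y ∈ S) : F y ≤ ⨆ x ∈ S, F x :=
  le_ciSup₂ (f := fun x (_ : x ∈ S) => F x)
    (hF.mono (iUnion_subset fun _ => range_subset_iff.2 fun hx => mem_image_of_mem F hx)) y hy

lemma abs_le_exp_mul_cbiSup_exp_neg_mul {S : Set ℝ} {f : ℝ → ℝ} {c M : ℝ} (hc : 0 ≤ c)
    (hf : ∀ x ∈ S, |f x| ≤ M) {y : ℝ} (hy : y ∈ S) :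
    |f y| ≤ exp (c * |y|) * ⨆ x ∈ S, exp (-(c * |x|)) * |f x| := by
  have hbdd : BddAbove ((fun x => exp (-(c * |x|)) * |f x|) '' S) := by
    refine ⟨M, forall_mem_image.2 fun x hx => ?_⟩
    have : exp (-(c * |x|)) ≤ 1 := exp_le_one_iff.2 (by simp only [neg_nonpos]; positivity)
    nlinarith [hf x hx, abs_nonneg (f x), exp_pos (-(c * |x|))]
  calc |f y| = exp (c * |y|) * (exp (-(c * |y|)) * |f y|) := by
        rw [← mul_assoc, ← exp_add, add_neg_cancel, exp_zero, one_mul]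
    _ ≤ _ := by gcongr; exact le_cbiSup_of_bddAbove_image hbdd hy

lemma abs_one_div_chi_sub_le_mul_exp {S : Set ℝ} {m₁ m₂ : ℝ → ℝ} {β μ c : ℝ} (hβ : 0 < β)
    (hμ : μ < 1) (hc : 0 ≤ c) (hm₁ : ∀ x ∈ S, |m₁ x| ≤ μ) (hm₂ : ∀ x ∈ S, |m₂ x| ≤ μ) {y : ℝ}
    (hy : y ∈ S) :
    |1 / chi β (m₂ y) - 1 / chi β (m₁ y)|
      ≤ 2 * β / chi β μ ^ 2 * (⨆ x ∈ S, exp (-(c * |x|)) * |m₂ x - m₁ x|) * exp (c * |y|) :=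
  calc _ ≤ 2 * β / chi β μ ^ 2 * |m₂ y - m₁ y| :=
        abs_one_div_chi_sub_one_div_chi_le hβ hμ (hm₂ y hy) (hm₁ y hy)
    _ ≤ 2 * β / chi β μ ^ 2 * (exp (c * |y|) * ⨆ x ∈ S, exp (-(c * |x|)) * |m₂ x - m₁ x|) := by
        gcongr
        exact abs_le_exp_mul_cbiSup_exp_neg_mul hc
          (fun x hx => (abs_sub _ _).trans (add_le_add (hm₂ x hx) (hm₁ x hx))) hy
    _ = _ := by ring

theorem stmt_14_general
    (β j ε α : ℝ) (hβ : 1 < β) (hj : 0 < j) (hε : 0 < ε) (hα : 0 < α)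
    (mβ : ℝ) (hmβ : mβ ∈ Set.Ioo (0:ℝ) 1)
    (m₁ m₂ : ℝ → ℝ) (hm₁ : Measurable m₁) (hm₂ : Measurable m₂)
    (hm₁r : ∀ x ∈ Set.Icc (-ε⁻¹) ε⁻¹, m₁ x ∈ Set.Icc (-mβ) mβ)
    (hm₂r : ∀ x ∈ Set.Icc (-ε⁻¹) ε⁻¹, m₂ x ∈ Set.Icc (-mβ) mβ) :
    (⨆ x ∈ Set.Icc (-ε⁻¹) ε⁻¹,
        Real.exp (-(α * ε * |x|)) *
          |(-(j * ε) * ∫ y in (0:ℝ)..x, 1 / (β * (1 - (m₂ y) ^ 2)))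
            - (-(j * ε) * ∫ y in (0:ℝ)..x, 1 / (β * (1 - (m₁ y) ^ 2)))|)
      ≤ (2 * β * j / (α * (β * (1 - mβ ^ 2)) ^ 2)) *
        ⨆ x ∈ Set.Icc (-ε⁻¹) ε⁻¹, Real.exp (-(α * ε * |x|)) * |m₂ x - m₁ x| := by
  set S := Icc (-ε⁻¹) ε⁻¹
  set N := ⨆ x ∈ S, exp (-(α * ε * |x|)) * |m₂ x - m₁ x|
  have hβ₀ : 0 < β := by linarith
  have hm₁b : ∀ x ∈ S, |m₁ x| ≤ mβ := fun x hx => abs_le.2 (hm₁r x hx)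
  have hm₂b : ∀ x ∈ S, |m₂ x| ≤ mβ := fun x hx => abs_le.2 (hm₂r x hx)
  have hN : 0 ≤ N := Real.iSup_nonneg fun x => Real.iSup_nonneg fun _ => by positivity
  have hinterval : ∀ x ∈ S, uIcc 0 x ⊆ S := fun x hx =>
    uIcc_subset_Icc ⟨by simp [hε.le], by simp [hε.le]⟩ hx
  refine Real.iSup_le (fun x => Real.iSup_le (fun hx => ?_) (by positivity)) (by positivity)
  have hbound := exp_neg_mul_abs_integral_le (c := α * ε) (by positivity) (by positivity)
    fun y hy => abs_one_div_chi_sub_le_mul_exp hβ₀ hmβ.2 (by positivity) hm₁b hm₂b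
      (hinterval x hx hy)
  rw [← mul_sub, abs_mul, abs_neg, abs_of_pos (by positivity : 0 < j * ε),
    ← intervalIntegral.integral_sub]
  · calc _ = j * ε * (exp (-(α * ε * |x|)) *
            |∫ y in 0..x, 1 / chi β (m₂ y) - 1 / chi β (m₁ y)|) := mul_left_comm _ _ _
      _ ≤ j * ε * (2 * β / chi β mβ ^ 2 * N / (α * ε)) := by gcongr
      _ = _ := by unfold chi; field_simp
  · exact intervalIntegrable_one_div_chi hβ₀ hmβ.2 hm₂ fun y hy => hm₂b y (hinterval x hx hy)
  · exact intervalIntegrable_one_div_chi hβ₀ hmβ.2 hm₁ fun y hy => hm₁b y (hinterval x hx hy)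

/-- Lipschitz bound for `H(m)(x) = −jε ∫₀ˣ dy/χ_β(m(y))` in the weighted norm
`‖f‖_{ε,α} = sup_{|x|≤ε⁻¹} e^{−αε|x|}|f(x)|`:
`‖H(m₂) − H(m₁)‖_{ε,α} ≤ (2βj/(α χ_β(m_β)²)) ‖m₂ − m₁‖_{ε,α}`.
Here `χ_β(m) = β(1−m²)` and `m_β ∈ (0,1)` solves `tanh(βm) = m`. -/
theorem stmt_14
    (β j ε α : ℝ) (hβ : 1 < β) (hj : 0 < j) (hε : 0 < ε) (hα : 0 < α)
    (mβ : ℝ) (hmβ : mβ ∈ Set.Ioo (0:ℝ) 1) (hmβeq : Real.tanh (β * mβ) = mβ)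
    (m₁ m₂ : ℝ → ℝ) (hm₁ : Measurable m₁) (hm₂ : Measurable m₂)
    (hm₁r : ∀ x ∈ Set.Icc (-ε⁻¹) ε⁻¹, m₁ x ∈ Set.Icc (-mβ) mβ)
    (hm₂r : ∀ x ∈ Set.Icc (-ε⁻¹) ε⁻¹, m₂ x ∈ Set.Icc (-mβ) mβ) :
    (⨆ x ∈ Set.Icc (-ε⁻¹) ε⁻¹,
        Real.exp (-(α * ε * |x|)) *
          |(-(j * ε) * ∫ y in (0:ℝ)..x, 1 / (β * (1 - (m₂ y) ^ 2)))
            - (-(j * ε) * ∫ y in (0:ℝ)..x, 1 / (β * (1 - (m₁ y) ^ 2)))|)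
      ≤ (2 * β * j / (α * (β * (1 - mβ ^ 2)) ^ 2)) *
        ⨆ x ∈ Set.Icc (-ε⁻¹) ε⁻¹, Real.exp (-(α * ε * |x|)) * |m₂ x - m₁ x| :=
  stmt_14_general β j ε α hβ hj hε hα mβ hmβ m₁ m₂ hm₁ hm₂ hm₁r hm₂r
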